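/- arXiv:2209.07860 — 2 statements merged into one kernel-verified Lean document; each statement's English description precedes it below -/
import Mathlib

section
/- Let (G, L, c, r, e_r) be a rooted WRAP instance and F⃗ a non-shortenable directed WRAP solution. Then for any v_1, v_2 ∈ V, the least common ancestor of v_1 and v_2 in the arborescence (V, F⃗) lies between v_1 and v_2, i.e., it lies on the unique v_1–v_2 path in (V, E \ {e_r}) (possibly equal to v_1 or v_2). -/
/-!
Common definitions for the Weighted Ring Augmentation Problem (WRAP).

A rooted WRAP instance `(G, L, c, r, e_r)` has a ring graph `G` whose
vertices we identify with `Fin n`, numbered `r = 0, 1, …, n-1` in the order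
in which they appear along the path `(V, E \ {e_r})` starting at the root
`r = 0`.  Vertex `i` is to the left of `j` iff `i < j`.
-/

/-- An undirected link: an unordered pair of distinct vertices of the ring,
recorded via its left endpoint `lo` and its right endpoint `hi`. -/
structure Link (n : ℕ) where
  lo : Fin n
  hi : Fin n
  lo_lt_hi : lo < hi

instance {n : ℕ} : DecidableEq (Link n) := fun a b =>
  decidable_of_iff (a.lo = b.lo ∧ a.hi = b.hi) (by cases a; cases b; simp)

/-- A directed link: an ordered pair of distinct vertices. -/
structure DLink (n : ℕ) where
  tail : Fin n
  head : Fin n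
  ne : tail ≠ head

instance {n : ℕ} : DecidableEq (DLink n) := fun a b =>
  decidable_of_iff (a.tail = b.tail ∧ a.head = b.head) (by cases a; cases b; simp)

variable {n : ℕ}

/-- The underlying undirected link of a directed link. -/
def DLink.toLink (d : DLink n) : Link n :=
  ⟨min d.tail d.head, max d.tail d.head, min_lt_max.mpr d.ne⟩

/-- `ℓ` is incident to `v`. -/
def Link.Incident (ℓ : Link n) (v : Fin n) : Prop := ℓ.lo = v ∨ ℓ.hi = v

/-- The 2-cuts `C_G` of the ring: the nonempty intervals of consecutive
vertices along the path `(V, E \ {e_r})` that do not contain the root `0`. -/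
def IsCut [NeZero n] (C : Finset (Fin n)) : Prop :=
  ∃ a b : Fin n, 0 < a ∧ a ≤ b ∧ C = Finset.Icc a b

/-- `ℓ` has exactly one endpoint in `C`. -/
def crossesCut (ℓ : Link n) (C : Finset (Fin n)) : Prop :=
  (ℓ.lo ∈ C ∧ ℓ.hi ∉ C) ∨ (ℓ.lo ∉ C ∧ ℓ.hi ∈ C)

instance (ℓ : Link n) (C : Finset (Fin n)) : Decidable (crossesCut ℓ C) := by
  unfold crossesCut; infer_instance

/-- `δ_K(C)`: the links of `K` with exactly one endpoint in `C`. -/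
def cutLinks (K : Finset (Link n)) (C : Finset (Fin n)) : Finset (Link n) :=
  K.filter (fun ℓ => crossesCut ℓ C)

/-- An (undirected) WRAP solution: every 2-cut is covered by some link. -/
def IsSolution [NeZero n] (S : Finset (Link n)) : Prop :=
  ∀ C : Finset (Fin n), IsCut C → (cutLinks S C).Nonempty

/-- A directed link covers a 2-cut if it enters it. -/
def DCovers (d : DLink n) (C : Finset (Fin n)) : Prop := d.tail ∉ C ∧ d.head ∈ C

/-- A directed WRAP solution: every 2-cut is entered by some directed link. -/
def IsDirSolution [NeZero n] (F : Finset (DLink n)) : Prop :=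
  ∀ C : Finset (Fin n), IsCut C → ∃ d ∈ F, DCovers d C

/-- `d'` is a shortening of `d`: same head, and the tail of `d'` lies on the
unique path between the endpoints of `d` in `(V, E \ {e_r})`. -/
def IsShortening (d' d : DLink n) : Prop :=
  d'.head = d.head ∧ min d.tail d.head ≤ d'.tail ∧ d'.tail ≤ max d.tail d.head

/-- A non-shortenable directed WRAP solution: deleting any link, or replacing
any link by a strict shortening of it, destroys feasibility. -/
def NonShortenable [NeZero n] (F : Finset (DLink n)) : Prop :=
  IsDirSolution F ∧
    (∀ d ∈ F, ¬ IsDirSolution (F.erase d)) ∧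
    (∀ d ∈ F, ∀ d' : DLink n, IsShortening d' d → d' ≠ d →
      ¬ IsDirSolution (insert d' (F.erase d)))

/-- `d` is a shadow of the undirected link `ℓ`: a shortening of one of the two
orientations of `ℓ`. -/
def IsShadow (d : DLink n) (ℓ : Link n) : Prop :=
  (d.head = ℓ.lo ∨ d.head = ℓ.hi) ∧ ℓ.lo ≤ d.tail ∧ d.tail ≤ ℓ.hi

/-- `u` is a descendant of `v` in `(V, F)` (every vertex is a descendant of
itself). -/
def Descend (F : Finset (DLink n)) (v u : Fin n) : Prop :=
  Relation.ReflTransGen (fun a b => ∃ d ∈ F, d.tail = a ∧ d.head = b) v u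

/-- `u` is `v`-good: not a descendant of `v` in `(V, F)`. -/
def VGood (F : Finset (DLink n)) (v u : Fin n) : Prop := ¬ Descend F v u

/-- `w` is the least common ancestor of the vertex set `U` in `(V, F)`. -/
def IsLCA (F : Finset (DLink n)) (w : Fin n) (U : Set (Fin n)) : Prop :=
  (∀ u ∈ U, Descend F w u) ∧ ∀ x : Fin n, (∀ u ∈ U, Descend F x u) → Descend F x w

/-- `d = (u,v)` is responsible for the 2-cut `C`: it covers `C` and no
directed link of `F` on the `r`–`u` path in the arborescence `(V, F)`
(i.e. no link of `F` whose head is an ancestor of `u`) covers `C`. -/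
def Responsible [NeZero n] (F : Finset (DLink n)) (d : DLink n)
    (C : Finset (Fin n)) : Prop :=
  IsCut C ∧ DCovers d C ∧
    ∀ d' ∈ F, Descend F d'.head d.tail → ¬ DCovers d' C

/-- `Drop_F(K)`: directed links of `F` all of whose responsible cuts
are covered by `K`. -/
def Drop [NeZero n] (F : Finset (DLink n)) (K : Finset (Link n)) : Set (DLink n) :=
  {d | d ∈ F ∧ ∀ C : Finset (Fin n), Responsible F d C → (cutLinks K C).Nonempty}

/-- Two links are crossing: their endpoints interleave along the ring. -/
def Crossing (ℓ f : Link n) : Prop :=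
  (ℓ.lo < f.lo ∧ f.lo < ℓ.hi ∧ ℓ.hi < f.hi) ∨
  (f.lo < ℓ.lo ∧ ℓ.lo < f.hi ∧ f.hi < ℓ.hi)

/-- Two links intersect: they share an endpoint or cross. -/
def Intersects (ℓ f : Link n) : Prop :=
  (ℓ.lo = f.lo ∨ ℓ.lo = f.hi ∨ ℓ.hi = f.lo ∨ ℓ.hi = f.hi) ∨ Crossing ℓ f

/-- The vertex `u` is connected to the vertex `w` in the link intersection
graph `H[K]`: there is a path in `H[K]` from a link incident to `u` to a link
incident to `w`. -/
def ConnVert (K : Finset (Link n)) (u w : Fin n) : Prop :=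
  ∃ ℓ ∈ K, ∃ f ∈ K, ℓ.Incident u ∧ f.Incident w ∧
    Relation.ReflTransGen (fun a b => a ∈ K ∧ b ∈ K ∧ Intersects a b) ℓ f

/-- The link intersection graph `H[S]` is connected. -/
def ConnLinkSet (S : Finset (Link n)) : Prop :=
  ∀ ℓ ∈ S, ∀ f ∈ S,
    Relation.ReflTransGen (fun a b => a ∈ S ∧ b ∈ S ∧ Intersects a b) ℓ f

/-- `V(S)`: the vertices incident to a link of `S`. -/
def linkVerts (S : Finset (Link n)) : Set (Fin n) := {v | ∃ ℓ ∈ S, ℓ.Incident v}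

/-- A festoon order: the links (listed as `f 0, f 1, …`) form a path in the
link intersection graph visited in this order, with both left endpoints and
right endpoints strictly increasing. -/
def IsFestoonSeq {p : ℕ} (f : Fin p → Link n) : Prop :=
  (∀ i j : Fin p, i < j → (f i).lo < (f j).lo ∧ (f i).hi < (f j).hi) ∧
  (∀ i j : Fin p, (i : ℕ) + 1 = (j : ℕ) → Intersects (f i) (f j)) ∧
  (∀ i j : Fin p, (i : ℕ) + 1 < (j : ℕ) → ¬ Intersects (f i) (f j))

/-- A festoon: a nonempty link set admitting a festoon order. -/
def IsFestoon (X : Finset (Link n)) : Prop :=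
  ∃ p : ℕ, 0 < p ∧ ∃ f : Fin p → Link n,
    IsFestoonSeq f ∧ X = Finset.image f Finset.univ

/-- The festoon interval `I_X`: the interval from the leftmost endpoint of a
link of `X` to the rightmost endpoint of a link of `X`. -/
def festoonIval (X : Finset (Link n)) : Set (Fin n) :=
  {w | (∃ ℓ ∈ X, ℓ.lo ≤ w) ∧ ∃ ℓ ∈ X, w ≤ ℓ.hi}

/-- Two festoons are tangled: some link of one intersects some link of the
other. -/
def Tangled (X Y : Finset (Link n)) : Prop :=
  ∃ ℓ ∈ X, ∃ f ∈ Y, Intersects ℓ f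

/-- A laminar family of vertex sets: any two members are nested or disjoint. -/
def Laminar (𝓛 : Set (Finset (Fin n))) : Prop :=
  ∀ A ∈ 𝓛, ∀ B ∈ 𝓛, A ⊆ B ∨ B ⊆ A ∨ Disjoint A B

/-- An inclusion-wise maximal laminar subfamily of `C_G`. -/
def MaxLaminarCuts [NeZero n] (𝓛 : Set (Finset (Fin n))) : Prop :=
  (∀ C ∈ 𝓛, IsCut C) ∧ Laminar 𝓛 ∧
    ∀ C : Finset (Fin n), IsCut C → C ∉ 𝓛 → ¬ Laminar (insert C 𝓛)

/-- An `α`-thin link set. -/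
def IsThin [NeZero n] (α : ℕ) (K : Finset (Link n)) : Prop :=
  ∃ 𝓛 : Set (Finset (Fin n)), MaxLaminarCuts 𝓛 ∧ ∀ C ∈ 𝓛, (cutLinks K C).card ≤ α

/-- The set `𝒳` of festoons connects `v` to a `v`-good vertex. -/
def ConnectsToGood (F : Finset (DLink n)) (v : Fin n)
    (𝒳 : Finset (Finset (Link n))) : Prop :=
  ∃ w : Fin n, VGood F v w ∧ ConnVert (𝒳.biUnion id) v w

/-- The undirected graph obtained from a set of directed links by
disregarding orientations. -/
def undirGraph (F : Finset (DLink n)) : SimpleGraph (Fin n) where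
  Adj a b := ∃ d ∈ F, (d.tail = a ∧ d.head = b) ∨ (d.tail = b ∧ d.head = a)
  symm := by
    constructor
    rintro a b ⟨d, hd, h⟩
    exact ⟨d, hd, h.symm⟩
  loopless := by
    constructor
    rintro a ⟨d, hd, h⟩
    rcases h with ⟨h1, h2⟩ | ⟨h1, h2⟩ <;> exact d.ne (h1.trans h2.symm)

/-- A directed link going to the left along the ring. -/
def LeftGoing (d : DLink n) : Prop := d.head < d.tail

/-- A directed link going to the right along the ring. -/
def RightGoing (d : DLink n) : Prop := d.tail < d.head


/-!
Non-shortenability gives every link `d = (u, v)` of `F` a private cut: a cut entered by `d`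
alone that contains the neighbour of `u` on the way to `v`. Gluing private cuts along the links
of `F` below `v` yields a cut containing every descendant of `v` but not `u` and entered only
from `u`. So descendants of `v` stay on `v`'s side of `u`; in particular `(V, F)` has no cycles
and is an arborescence rooted at `0`. If the least common ancestor `w` of `v₁` and `v₂` were not
between them, its children towards `v₁` and `v₂` would lie on the same side of `w`, and the
nearer one would enter the private cut of the other link leaving `w`.
-/

section Cuts

variable {N : ℕ}

lemma DCovers.of_union {d : DLink N} {C₁ C₂ : Finset (Fin N)} (h : DCovers d (C₁ ∪ C₂)) :
    DCovers d C₁ ∨ DCovers d C₂ := by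
  obtain ⟨ht, hh⟩ := h
  rw [Finset.mem_union, not_or] at ht
  exact (Finset.mem_union.mp hh).imp (⟨ht.1, ·⟩) (⟨ht.2, ·⟩)

variable [NeZero N]

lemma IsCut.union {C₁ C₂ : Finset (Fin N)} (h₁ : IsCut C₁) (h₂ : IsCut C₂) {y s : Fin N}
    (hy : y ∈ C₁) (hs : s ∈ C₂) (hys : (y : ℕ) ≤ s + 1) (hsy : (s : ℕ) ≤ y + 1) :
    IsCut (C₁ ∪ C₂) := by
  obtain ⟨a, b, ha, hab, rfl⟩ := h₁
  obtain ⟨c, d, hc, hcd, rfl⟩ := h₂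
  refine ⟨min a c, max b d, lt_min ha hc,
    (min_le_left _ _).trans (hab.trans (le_max_left _ _)), ?_⟩
  ext z
  simp only [Finset.mem_union, Finset.mem_Icc, min_le_iff, le_max_iff] at *
  omega

end Cuts

section NonShortenable

variable {N : ℕ} [NeZero N] {F : Finset (DLink N)}

lemma IsDirSolution.exists_head_eq (hF : IsDirSolution F) {v : Fin N} (hv : v ≠ 0) :
    ∃ d ∈ F, d.head = v := by
  obtain ⟨d, hd, -, hdv⟩ := hF {v} ⟨v, v, Fin.pos_iff_ne_zero.mpr hv, le_rfl, by simp⟩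
  exact ⟨d, hd, Finset.mem_singleton.mp hdv⟩

lemma IsDirSolution.exists_private_cut {F' : Finset (DLink N)} {d : DLink N}
    (hF : IsDirSolution F) (hsub : F.erase d ⊆ F') (hF' : ¬ IsDirSolution F') :
    ∃ C, IsCut C ∧ DCovers d C ∧ (∀ f ∈ F, DCovers f C → f = d) ∧
      ∀ f ∈ F', ¬ DCovers f C := by
  simp only [IsDirSolution, not_forall, not_exists, not_and] at hF'
  obtain ⟨C, hC, hnot⟩ := hF'
  have honly : ∀ f ∈ F, DCovers f C → f = d := fun f hf hcov =>
    by_contra fun hne => hnot f (hsub (Finset.mem_erase.mpr ⟨hne, hf⟩)) hcov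
  obtain ⟨f, hf, hcov⟩ := hF C hC
  exact ⟨C, hC, honly f hf hcov ▸ hcov, honly, hnot⟩

lemma NonShortenable.exists_private_cut_near_tail (hF : NonShortenable F) {d : DLink N}
    (hd : d ∈ F) :
    ∃ C, IsCut C ∧ DCovers d C ∧ (∀ f ∈ F, DCovers f C → f = d) ∧
      ∃ s ∈ C, (s : ℕ) ≤ d.tail + 1 ∧ (d.tail : ℕ) ≤ s + 1 := by
  obtain ⟨hsol, hdel, hshort⟩ := hF
  have hhead := d.head.isLt
  let s : Fin N :=
    ⟨if d.tail < d.head then (d.tail : ℕ) + 1 else (d.tail : ℕ) - 1, by split_ifs <;> omega⟩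
  have hs : (s : ℕ) = if d.tail < d.head then (d.tail : ℕ) + 1 else (d.tail : ℕ) - 1 := rfl
  have hne := d.ne
  have hs_near : (s : ℕ) ≤ d.tail + 1 ∧ (d.tail : ℕ) ≤ s + 1 := by split_ifs at hs <;> omega
  by_cases hsh : s = d.head
  · obtain ⟨C, hC, hcov, honly, -⟩ := hsol.exists_private_cut subset_rfl (hdel d hd)
    exact ⟨C, hC, hcov, honly, s, hsh ▸ hcov.2, hs_near⟩
  · let d' : DLink N := ⟨s, d.head, hsh⟩
    have hd' : IsShortening d' d := by
      refine ⟨rfl, ?_, ?_⟩ <;> simp only [d', min_le_iff, le_max_iff] <;> split_ifs at hs <;> omega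
    have hd'd : d' ≠ d := fun h => by
      have : (s : ℕ) = d.tail := congrArg (fun e : DLink N => (e.tail : ℕ)) h
      split_ifs at hs <;> omega
    obtain ⟨C, hC, hcov, honly, hnot⟩ :=
      hsol.exists_private_cut (Finset.subset_insert _ _) (hshort d hd d' hd' hd'd)
    have hsC : s ∈ C := by_contra fun h => hnot d' (Finset.mem_insert_self _ _) ⟨h, hcov.2⟩
    exact ⟨C, hC, hcov, honly, s, hsC, hs_near⟩

lemma NonShortenable.injOn_head (hF : NonShortenable F) :
    Set.InjOn DLink.head (F : Set (DLink N)) := by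
  intro d₁ hd₁ d₂ hd₂ hh
  obtain ⟨C₁, hC₁, hcov₁, honly₁, -⟩ := hF.exists_private_cut_near_tail hd₁
  obtain ⟨C₂, hC₂, hcov₂, honly₂, -⟩ := hF.exists_private_cut_near_tail hd₂
  obtain ⟨f, hf, hcov⟩ :=
    hF.1 _ (hC₁.union hC₂ hcov₁.2 (hh ▸ hcov₂.2) (Nat.le_succ _) (Nat.le_succ _))
  have htail : f.tail ∉ C₁ ∧ f.tail ∉ C₂ := by simpa only [Finset.mem_union, not_or] using hcov.1
  rcases hcov.of_union with h | h
  · obtain rfl := honly₁ f hf h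
    exact honly₂ f hf ⟨htail.2, hh ▸ hcov₂.2⟩
  · obtain rfl := honly₂ f hf h
    exact (honly₁ f hf ⟨htail.1, hh ▸ hcov₁.2⟩).symm

end NonShortenable

section Descendants

variable {N : ℕ} {F : Finset (DLink N)}

def EnteredOnlyFrom (F : Finset (DLink N)) (C : Finset (Fin N)) (u : Fin N) : Prop :=
  ∀ f ∈ F, DCovers f C → f.tail = u

variable [NeZero N] {d : DLink N}

lemma NonShortenable.exists_cut_of_descend (hF : NonShortenable F) (hd : d ∈ F) {x : Fin N}
    (hx : Descend F d.head x) :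
    ∃ C, IsCut C ∧ d.head ∈ C ∧ x ∈ C ∧ d.tail ∉ C ∧ EnteredOnlyFrom F C d.tail := by
  induction hx with
  | refl =>
    obtain ⟨C, hC, hcov, honly, -⟩ := hF.exists_private_cut_near_tail hd
    exact ⟨C, hC, hcov.2, hcov.2, hcov.1, fun f hf hcov' => honly f hf hcov' ▸ rfl⟩
  | tail _ hyx ih =>
    obtain ⟨C, hC, hv, hy, hu, honly⟩ := ih
    obtain ⟨g, hg, rfl, rfl⟩ := hyx
    obtain ⟨D, hD, hgD, hgonly, s, hs, hs₁, hs₂⟩ := hF.exists_private_cut_near_tail hg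
    have hW := hC.union hD hy hs hs₂ hs₁
    have honlyW : EnteredOnlyFrom F (C ∪ D) d.tail := by
      intro f hf hcov
      rcases hcov.of_union with h | h
      · exact honly f hf h
      · exact absurd (Finset.mem_union_left _ hy) (hgonly f hf h ▸ hcov.1)
    have huW : d.tail ∉ C ∪ D := by
      intro hmem
      obtain ⟨f, hf, hcov⟩ := hF.1 _ hW
      exact hcov.1 (honlyW f hf hcov ▸ hmem)
    exact ⟨C ∪ D, hW, Finset.mem_union_left _ hv, Finset.mem_union_right _ hgD.2, huW, honlyW⟩

lemma NonShortenable.not_descend_head_tail (hF : NonShortenable F) (hd : d ∈ F) :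
    ¬ Descend F d.head d.tail := fun h =>
  let ⟨_, _, _, hu, hu', _⟩ := hF.exists_cut_of_descend hd h
  hu' hu

lemma NonShortenable.lt_tail_iff_of_descend (hF : NonShortenable F) (hd : d ∈ F) {x : Fin N}
    (hx : Descend F d.head x) : x < d.tail ↔ d.head < d.tail := by
  obtain ⟨C, ⟨a, b, -, -, rfl⟩, hv, hx, hu, -⟩ := hF.exists_cut_of_descend hd hx
  simp only [Finset.mem_Icc] at hv hx hu
  omega

end Descendants

section Arborescence

variable {N : ℕ} {F : Finset (DLink N)}

lemma Descend.total_of_injOn (hinj : Set.InjOn DLink.head (F : Set (DLink N)))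
    {x x' v : Fin N} (hx : Descend F x v) (hx' : Descend F x' v) :
    Descend F x x' ∨ Descend F x' x := by
  induction hx with
  | refl => exact Or.inr hx'
  | tail hxy hyv ih =>
    rcases hx'.cases_tail with rfl | ⟨y', hx'y', hy'v⟩
    · exact Or.inl (hxy.tail hyv)
    · obtain ⟨g, hg, rfl, rfl⟩ := hyv
      obtain ⟨g', hg', rfl, hh⟩ := hy'v
      rw [hinj hg' hg hh] at hx'y'
      exact ih hx'y'

open Classical in
noncomputable def ancestors (F : Finset (DLink N)) (v : Fin N) : Finset (Fin N) :=
  {x | Descend F x v}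

lemma mem_ancestors {v x : Fin N} : x ∈ ancestors F v ↔ Descend F x v := by
  simp [ancestors]

lemma ancestors_mono {v w : Fin N} (h : Descend F v w) : ancestors F v ⊆ ancestors F w :=
  fun _ hx => (mem_ancestors.mp hx).trans h |> mem_ancestors.mpr

variable [NeZero N]

lemma NonShortenable.descend_zero (hF : NonShortenable F) (v : Fin N) : Descend F 0 v := by
  by_cases hv : v = 0
  · exact hv ▸ .refl
  obtain ⟨d, hd, rfl⟩ := hF.1.exists_head_eq hv
  have hlink : Descend F d.tail d.head := .single ⟨d, hd, rfl, rfl⟩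
  have : (ancestors F d.tail).card < (ancestors F d.head).card :=
    Finset.card_lt_card <| (Finset.ssubset_iff_of_subset (ancestors_mono hlink)).mpr
      ⟨d.head, mem_ancestors.mpr .refl, fun h => hF.not_descend_head_tail hd (mem_ancestors.mp h)⟩
  exact (hF.descend_zero d.tail).trans hlink
termination_by (ancestors F v).card

lemma NonShortenable.exists_isLCA (hF : NonShortenable F) {U : Set (Fin N)} (hU : U.Nonempty) :
    ∃ w, IsLCA F w U := by
  classical
  let S : Finset (Fin N) := {x | ∀ u ∈ U, Descend F x u}
  have hS : ∀ {x}, x ∈ S ↔ ∀ u ∈ U, Descend F x u := by simp [S]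
  obtain ⟨w, hwS, hmax⟩ := S.exists_max_image (fun x => (ancestors F x).card)
    ⟨0, hS.mpr fun u _ => hF.descend_zero u⟩
  refine ⟨w, hS.mp hwS, fun x hx => ?_⟩
  obtain ⟨u, hu⟩ := hU
  rcases (hx u hu).total_of_injOn hF.injOn_head (hS.mp hwS u hu) with hxw | hwx
  · exact hxw
  · have heq := Finset.eq_of_subset_of_card_le (ancestors_mono hwx) (hmax x (hS.mpr hx))
    exact mem_ancestors.mp (heq ▸ mem_ancestors.mpr .refl)

end Arborescence

section Between

variable {N : ℕ} [NeZero N] {F : Finset (DLink N)}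

lemma NonShortenable.eq_of_tail_eq_of_head_between (hF : NonShortenable F) {e₁ e₂ : DLink N}
    (he₁ : e₁ ∈ F) (he₂ : e₂ ∈ F) (ht : e₁.tail = e₂.tail)
    (hbetween : e₁.tail < e₁.head ∧ e₁.head ≤ e₂.head ∨ e₂.head ≤ e₁.head ∧ e₁.head < e₁.tail) :
    e₁ = e₂ := by
  obtain ⟨D, ⟨a, b, -, -, rfl⟩, hcov, honly, s, hs, hs₁, hs₂⟩ :=
    hF.exists_private_cut_near_tail he₂
  simp only [DCovers, Finset.mem_Icc] at hcov hs
  refine honly e₁ he₁ ⟨ht ▸ ?_, ?_⟩ <;> simp only [Finset.mem_Icc] <;> omega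

lemma NonShortenable.head_lt_tail_iff_of_siblings (hF : NonShortenable F) {e₁ e₂ : DLink N}
    (he₁ : e₁ ∈ F) (he₂ : e₂ ∈ F) (hne : e₁ ≠ e₂) (ht : e₁.tail = e₂.tail) :
    e₁.head < e₁.tail ↔ e₂.tail < e₂.head := by
  have := e₁.ne
  have := e₂.ne
  by_contra h
  by_cases hb : e₁.tail < e₁.head ∧ e₁.head ≤ e₂.head ∨ e₂.head ≤ e₁.head ∧ e₁.head < e₁.tail
  · exact hne (hF.eq_of_tail_eq_of_head_between he₁ he₂ ht hb)
  · exact hne (hF.eq_of_tail_eq_of_head_between he₂ he₁ ht.symm (by omega)).symm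

lemma NonShortenable.exists_children_of_isLCA (hF : NonShortenable F) {w v₁ v₂ : Fin N}
    (hw : IsLCA F w {v₁, v₂}) (h₁ : w ≠ v₁) (h₂ : w ≠ v₂) :
    ∃ e₁ ∈ F, ∃ e₂ ∈ F, e₁ ≠ e₂ ∧ e₁.tail = w ∧ e₂.tail = w ∧
      Descend F e₁.head v₁ ∧ Descend F e₂.head v₂ := by
  obtain ⟨c₁, ⟨e₁, he₁, ht₁, rfl⟩, hd₁⟩ :=
    ((hw.1 v₁ (by simp)).cases_head).resolve_left h₁
  obtain ⟨c₂, ⟨e₂, he₂, ht₂, rfl⟩, hd₂⟩ :=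
    ((hw.1 v₂ (by simp)).cases_head).resolve_left h₂
  refine ⟨e₁, he₁, e₂, he₂, fun h => ?_, ht₁, ht₂, hd₁, hd₂⟩
  subst h
  have hcommon : Descend F e₁.head e₁.tail := ht₁ ▸ hw.2 _ (by simpa using ⟨hd₁, hd₂⟩)
  exact hF.not_descend_head_tail he₁ hcommon

lemma NonShortenable.isLCA_between (hF : NonShortenable F) {w v₁ v₂ : Fin N}
    (hw : IsLCA F w {v₁, v₂}) : min v₁ v₂ ≤ w ∧ w ≤ max v₁ v₂ := by
  simp only [min_le_iff, le_max_iff]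
  by_cases h₁ : w = v₁
  · omega
  by_cases h₂ : w = v₂
  · omega
  obtain ⟨e₁, he₁, e₂, he₂, hne, rfl, ht, hd₁, hd₂⟩ := hF.exists_children_of_isLCA hw h₁ h₂
  have := hF.lt_tail_iff_of_descend he₁ hd₁
  have := hF.lt_tail_iff_of_descend he₂ hd₂
  have := hF.head_lt_tail_iff_of_siblings he₁ he₂ hne ht.symm
  have := e₂.ne
  omega

end Between

theorem lca_lies_between_general {n : ℕ}
    (F : Finset (DLink (n + 3))) (hF : NonShortenable F)
    (v₁ v₂ : Fin (n + 3)) :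
    ∃ w : Fin (n + 3), IsLCA F w {v₁, v₂} ∧ min v₁ v₂ ≤ w ∧ w ≤ max v₁ v₂ := by
  obtain ⟨w, hw⟩ := hF.exists_isLCA (Set.insert_nonempty v₁ {v₂})
  exact ⟨w, hw, hF.isLCA_between hw⟩

/-- for a non-shortenable directed WRAP solution `F`, the
least common ancestor of any two vertices `v₁, v₂` in the arborescence
`(V, F)` lies between `v₁` and `v₂`, i.e. on the unique `v₁`–`v₂` path in
`(V, E \ {e_r})` (possibly equal to `v₁` or `v₂`). -/
theorem lca_lies_between {n : ℕ}
    (L : Finset (Link (n + 3))) (c : Link (n + 3) → ℝ)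
    (F : Finset (DLink (n + 3))) (hF : NonShortenable F)
    (v₁ v₂ : Fin (n + 3)) :
    ∃ w : Fin (n + 3), IsLCA F w {v₁, v₂} ∧ min v₁ v₂ ≤ w ∧ w ≤ max v₁ v₂ :=
  lca_lies_between_general F hF v₁ v₂
end

section
/- Let (G, L, c, r, e_r) be a rooted WRAP instance and F⃗ a non-shortenable directed WRAP solution. Then a directed link (u, v) ∈ F⃗ is responsible for a 2-cut C ∈ C_G if and only if v ∈ C and every vertex of C is v-bad. -/
variable {n : ℕ}

/-! The links of a non-shortenable solution form an arborescence rooted at `0`, and every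
vertex on the path from the tail to the head of a link `e ∈ F` (other than the tail) descends from
`e.head`: otherwise a shortening of `e` would still be feasible. Now let `(u, v)` be responsible
for `C`. Then no ancestor of `u` lies in `C`, and every `w ∈ C` descends from the head of the
link `e` by which the root–`w` path enters `C`. If `e.head ≠ v`, the two entering links come from
opposite sides of the interval `C`, and the deepest common ancestor of their tails yields a link
jumping over `C` whose head is again a common ancestor, but a deeper one. -/

theorem Relation.ReflTransGen.exists_exit {α : Type*} {r : α → α → Prop} {p : α → Prop}
    {a b : α} (h : Relation.ReflTransGen r a b) (ha : p a) (hb : ¬ p b) :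
    ∃ x y, Relation.ReflTransGen r a x ∧ r x y ∧ Relation.ReflTransGen r y b ∧ p x ∧ ¬ p y := by
  induction h using Relation.ReflTransGen.head_induction_on with
  | refl => exact absurd ha hb
  | @head a c hac hcb ih =>
    by_cases hc : p c
    · obtain ⟨x, y, hcx, hxy, hyb, hx, hy⟩ := ih hc
      exact ⟨x, y, .head hac hcx, hxy, hyb, hx, hy⟩
    · exact ⟨a, c, .refl, hac, hcb, ha, hc⟩

def IsParent (F : Finset (DLink n)) (a b : Fin n) : Prop := ∃ d ∈ F, d.tail = a ∧ d.head = b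

theorem IsParent.of_mem {F : Finset (DLink n)} {d : DLink n} (hd : d ∈ F) :
    IsParent F d.tail d.head :=
  ⟨d, hd, rfl, rfl⟩

theorem exists_mem_uIcc_of_descend {F : Finset (DLink n)} {x y z : Fin n} (h : Descend F x y)
    (hz : z ∈ Set.uIcc x y) (hzx : z ≠ x) : ∃ g ∈ F, Descend F x g.tail ∧ Descend F g.head y ∧
      z ∈ Set.uIcc g.tail g.head ∧ z ≠ g.tail := by
  rcases Set.mem_uIcc.1 hz with ⟨hxz, hzy⟩ | ⟨hyz, hzx'⟩
  · obtain ⟨_, _, hxt, ⟨g, hg, rfl, rfl⟩, hhy, ht, hh⟩ :=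
      h.exists_exit (p := (· < z)) (hxz.lt_of_ne' hzx) hzy.not_gt
    exact ⟨g, hg, hxt, hhy, Set.mem_uIcc.2 (.inl ⟨ht.le, not_lt.1 hh⟩), ht.ne'⟩
  · obtain ⟨_, _, hxt, ⟨g, hg, rfl, rfl⟩, hhy, ht, hh⟩ :=
      h.exists_exit (p := (z < ·)) (hzx'.lt_of_ne hzx) hyz.not_gt
    exact ⟨g, hg, hxt, hhy, Set.mem_uIcc.2 (.inr ⟨not_lt.1 hh, ht.le⟩), ht.ne⟩

section Cuts

variable [NeZero n]

theorem IsCut.ne_zero_of_mem {C : Finset (Fin n)} (hC : IsCut C) {z : Fin n} (hz : z ∈ C) :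
    z ≠ 0 := by
  obtain ⟨a, b, ha, -, rfl⟩ := hC
  rintro rfl
  exact (Finset.mem_Icc.1 hz).1.not_gt ha

theorem IsCut.mem_of_le_of_le {C : Finset (Fin n)} (hC : IsCut C) {x y z : Fin n} (hx : x ∈ C)
    (hy : y ∈ C) (hxz : x ≤ z) (hzy : z ≤ y) : z ∈ C := by
  obtain ⟨a, b, -, -, rfl⟩ := hC
  exact Finset.mem_Icc.2 ⟨(Finset.mem_Icc.1 hx).1.trans hxz, hzy.trans (Finset.mem_Icc.1 hy).2⟩

theorem isCut_of_forall_mem_cut {U : Finset (Fin n)} {m M : Fin n} (hmM : m ≤ M)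
    (hU : Finset.Icc m M ⊆ U)
    (hcov : ∀ z ∈ U, ∃ W, IsCut W ∧ W ⊆ U ∧ z ∈ W ∧ ∃ y ∈ W, m ≤ y ∧ y ≤ M) : IsCut U := by
  have hne : U.Nonempty := ⟨m, hU (Finset.left_mem_Icc.2 hmM)⟩
  obtain ⟨W, hW, -, hmin, -⟩ := hcov _ (U.min'_mem hne)
  refine ⟨U.min' hne, U.max' hne, Fin.pos_iff_ne_zero.2 (hW.ne_zero_of_mem hmin),
    U.min'_le _ (U.max'_mem hne), Finset.ext fun z => ?_⟩
  rw [Finset.mem_Icc]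
  refine ⟨fun hz => ⟨U.min'_le z hz, U.le_max' z hz⟩, fun ⟨h₁, h₂⟩ => ?_⟩
  rcases lt_or_ge z m with hzm | hmz
  · obtain ⟨W, hW, hWU, hmin, y, hy, hmy, -⟩ := hcov _ (U.min'_mem hne)
    exact hWU (hW.mem_of_le_of_le hmin hy h₁ (hzm.le.trans hmy))
  rcases le_or_gt z M with hzM | hMz
  · exact hU (Finset.mem_Icc.2 ⟨hmz, hzM⟩)
  · obtain ⟨W, hW, hWU, hmax, y, hy, -, hyM⟩ := hcov _ (U.max'_mem hne)
    exact hWU (hW.mem_of_le_of_le hy hmax (hyM.trans hMz.le) h₂)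

end Cuts

/-- `g` is the link by which the path from the root to `g.head` enters `S`. -/
def IsEntry (F : Finset (DLink n)) (S : Set (Fin n)) (g : DLink n) : Prop :=
  g ∈ F ∧ g.head ∈ S ∧ ∀ y, Descend F y g.tail → y ∉ S

section Arborescence

variable [NeZero n] {F : Finset (DLink n)}

def OnlyCovers (F : Finset (DLink n)) (e : DLink n) (W : Finset (Fin n)) : Prop :=
  IsCut W ∧ DCovers e W ∧ ∀ f ∈ F, DCovers f W → f = e

theorem IsDirSolution.exists_onlyCovers {d : DLink n} (hF : IsDirSolution F)
    {G : Finset (DLink n)} (hG : F.erase d ⊆ G) (hG' : ¬ IsDirSolution G) :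
    ∃ W, OnlyCovers F d W ∧ ∀ g ∈ G, ¬ DCovers g W := by
  simp only [IsDirSolution, not_forall, not_exists, not_and] at hG'
  obtain ⟨W, hW, hnone⟩ := hG'
  have honly : ∀ f ∈ F, DCovers f W → f = d := fun f hf hfW =>
    by_contra fun hne => hnone f (hG (Finset.mem_erase.2 ⟨hne, hf⟩)) hfW
  obtain ⟨f, hf, hfW⟩ := hF W hW
  exact ⟨W, ⟨hW, honly f hf hfW ▸ hfW, honly⟩, hnone⟩

/-- A link covering `U` covers the private cut containing its head, so it is the link of that
cut, whose tail lies in `U`. -/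
theorem IsDirSolution.false_of_forall_onlyCovers (hF : IsDirSolution F) {U : Finset (Fin n)}
    {m M : Fin n} (hmM : m ≤ M) (hU : Finset.Icc m M ⊆ U)
    (hcov : ∀ z ∈ U, ∃ e W, OnlyCovers F e W ∧ z ∈ W ∧ W ⊆ U ∧ e.tail ∈ U ∧
      e.head ∈ Finset.Icc m M) : False := by
  have hUcut : IsCut U := isCut_of_forall_mem_cut hmM hU fun z hz => by
    obtain ⟨e, W, ⟨hW, he, -⟩, hzW, hWU, -, hmem⟩ := hcov z hz
    exact ⟨W, hW, hWU, hzW, e.head, he.2, Finset.mem_Icc.1 hmem⟩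
  obtain ⟨f, hf, hft, hfh⟩ := hF U hUcut
  obtain ⟨e, W, ⟨-, -, honly⟩, hfW, hWU, heU, -⟩ := hcov _ hfh
  obtain rfl := honly f hf ⟨fun h => hft (hWU h), hfW⟩
  exact hft heU

namespace NonShortenable

theorem exists_onlyCovers (hF : NonShortenable F) {d : DLink n} (hd : d ∈ F) :
    ∃ W, OnlyCovers F d W := by
  obtain ⟨W, hW, -⟩ := hF.1.exists_onlyCovers le_rfl (hF.2.1 d hd)
  exact ⟨W, hW⟩

theorem exists_onlyCovers_mem (hF : NonShortenable F) {d : DLink n} (hd : d ∈ F) {z : Fin n}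
    (hz : z ∈ Set.uIcc d.tail d.head) (hzt : z ≠ d.tail) : ∃ W, OnlyCovers F d W ∧ z ∈ W := by
  by_cases hzh : z = d.head
  · obtain ⟨W, hW⟩ := hF.exists_onlyCovers hd
    exact ⟨W, hW, hzh ▸ hW.2.1.2⟩
  let d' : DLink n := ⟨z, d.head, hzh⟩
  have hshort : IsShortening d' d := ⟨rfl, hz.1, hz.2⟩
  have hne : d' ≠ d := fun h => hzt (congrArg DLink.tail h)
  obtain ⟨W, hW, hnone⟩ := hF.1.exists_onlyCovers (Finset.subset_insert d' _)
    (hF.2.2 d hd d' hshort hne)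
  exact ⟨W, hW, by_contra fun h => hnone d' (Finset.mem_insert_self _ _) ⟨h, hW.2.1.2⟩⟩

theorem exists_parent (hF : NonShortenable F) {w : Fin n} (hw : w ≠ 0) : ∃ e ∈ F, e.head = w := by
  obtain ⟨e, he, -, hew⟩ :=
    hF.1 {w} ⟨w, w, Fin.pos_iff_ne_zero.2 hw, le_rfl, (Finset.Icc_self w).symm⟩
  exact ⟨e, he, Finset.mem_singleton.1 hew⟩

theorem head_injective (hF : NonShortenable F) {d₁ d₂ : DLink n} (h₁ : d₁ ∈ F) (h₂ : d₂ ∈ F)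
    (hh : d₁.head = d₂.head) : d₁ = d₂ := by
  by_contra hne
  obtain ⟨W₁, hW₁, hcov₁, honly₁⟩ := hF.exists_onlyCovers h₁
  obtain ⟨W₂, hW₂, hcov₂, honly₂⟩ := hF.exists_onlyCovers h₂
  have ht₂ : d₂.tail ∈ W₁ := by_contra fun h => hne (honly₁ d₂ h₂ ⟨h, hh ▸ hcov₁.2⟩).symm
  have ht₁ : d₁.tail ∈ W₂ := by_contra fun h => hne (honly₂ d₁ h₁ ⟨h, hh.symm ▸ hcov₂.2⟩)
  refine hF.1.false_of_forall_onlyCovers (le_refl d₁.head) (U := W₁ ∪ W₂) ?_ fun z hz => ?_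
  · rw [Finset.Icc_self, Finset.singleton_subset_iff]
    exact Finset.mem_union_left _ hcov₁.2
  rcases Finset.mem_union.1 hz with hz | hz
  · exact ⟨d₁, W₁, ⟨hW₁, hcov₁, honly₁⟩, hz, Finset.subset_union_left,
      Finset.mem_union_right _ ht₁, Finset.left_mem_Icc.2 le_rfl⟩
  · exact ⟨d₂, W₂, ⟨hW₂, hcov₂, honly₂⟩, hz, Finset.subset_union_right,
      Finset.mem_union_left _ ht₂, hh ▸ Finset.left_mem_Icc.2 le_rfl⟩

/-- The links inside the strongly connected class of a cycle span an interval `[m, M]`; the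
union of their private cuts is then a cut that no link of `F` covers. -/
theorem transGen_irrefl (hF : NonShortenable F) (a : Fin n) :
    ¬ Relation.TransGen (IsParent F) a a := by
  classical
  intro h
  obtain ⟨_, ⟨d, hd, rfl, rfl⟩, hcyc⟩ := Relation.TransGen.head'_iff.1 h
  let S := Finset.univ.filter fun w => Descend F d.head w ∧ Descend F w d.head
  have mem_S {w} : w ∈ S ↔ Descend F d.head w ∧ Descend F w d.head := by simp [S]
  have hdS : d.head ∈ S := mem_S.2 ⟨.refl, .refl⟩
  have htS : d.tail ∈ S := mem_S.2 ⟨hcyc, .single (IsParent.of_mem hd)⟩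
  have internal {x y : Fin n} {g : DLink n} (hx : x ∈ S) (hy : y ∈ S) (hg : g ∈ F)
      (hxg : Descend F x g.tail) (hgy : Descend F g.head y) : g.tail ∈ S ∧ g.head ∈ S :=
    ⟨mem_S.2 ⟨(mem_S.1 hx).1.trans hxg, .head (IsParent.of_mem hg) (hgy.trans (mem_S.1 hy).2)⟩,
      mem_S.2 ⟨((mem_S.1 hx).1.trans hxg).tail (IsParent.of_mem hg), hgy.trans (mem_S.1 hy).2⟩⟩
  set m := S.min' ⟨_, hdS⟩
  set M := S.max' ⟨_, hdS⟩
  have hmS : m ∈ S := S.min'_mem _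
  have hMS : M ∈ S := S.max'_mem _
  have hmM : m < M := by
    rcases lt_or_gt_of_ne d.ne with hlt | hlt
    · exact (S.min'_le _ htS).trans_lt (hlt.trans_le (S.le_max' _ hdS))
    · exact (S.min'_le _ hdS).trans_lt (hlt.trans_le (S.le_max' _ htS))
  let U := Finset.univ.filter fun z =>
    ∃ e ∈ F, e.tail ∈ S ∧ e.head ∈ S ∧ ∃ W, OnlyCovers F e W ∧ z ∈ W
  have mem_U {z} : z ∈ U ↔ ∃ e ∈ F, e.tail ∈ S ∧ e.head ∈ S ∧ ∃ W, OnlyCovers F e W ∧ z ∈ W := by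
    simp [U]
  have hIcc : Finset.Icc m M ⊆ U := fun z hz => by
    obtain ⟨x, y, hx, hy, hzxy, hzx⟩ : ∃ x y, x ∈ S ∧ y ∈ S ∧ z ∈ Set.uIcc x y ∧ z ≠ x := by
      obtain ⟨hmz, hzM⟩ := Finset.mem_Icc.1 hz
      rcases eq_or_ne z m with rfl | hzm
      · exact ⟨M, m, hMS, hmS, Set.mem_uIcc.2 (.inr ⟨le_rfl, hmM.le⟩), hmM.ne⟩
      · exact ⟨m, M, hmS, hMS, Set.mem_uIcc.2 (.inl ⟨hmz, hzM⟩), hzm⟩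
    obtain ⟨e, he, hxe, hey, hze, hzt⟩ :=
      exists_mem_uIcc_of_descend ((mem_S.1 hx).2.trans (mem_S.1 hy).1) hzxy hzx
    obtain ⟨het, heh⟩ := internal hx hy he hxe hey
    exact mem_U.2 ⟨e, he, het, heh, hF.exists_onlyCovers_mem he hze hzt⟩
  have mem_Icc {w} (hw : w ∈ S) : w ∈ Finset.Icc m M :=
    Finset.mem_Icc.2 ⟨S.min'_le _ hw, S.le_max' _ hw⟩
  refine hF.1.false_of_forall_onlyCovers hmM.le hIcc fun z hz => ?_
  obtain ⟨e, he, het, heh, W, hW, hzW⟩ := mem_U.1 hz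
  exact ⟨e, W, hW, hzW, fun y hy => mem_U.2 ⟨e, he, het, heh, W, hW, hy⟩, hIcc (mem_Icc het),
    mem_Icc heh⟩

theorem wellFounded (hF : NonShortenable F) : WellFounded (Relation.TransGen (IsParent F)) :=
  @Finite.wellFounded_of_trans_of_irrefl _ _ _ _ ⟨hF.transGen_irrefl⟩

theorem wellFounded_flip (hF : NonShortenable F) :
    WellFounded (flip (Relation.TransGen (IsParent F))) :=
  @Finite.wellFounded_of_trans_of_irrefl _ _ _ ⟨fun _ _ _ h₁ h₂ => h₂.trans h₁⟩
    ⟨hF.transGen_irrefl⟩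

theorem exists_isEntry (hF : NonShortenable F) {S : Set (Fin n)} (h0 : 0 ∉ S) {z : Fin n}
    (hz : z ∈ S) : ∃ g, IsEntry F S g ∧ Descend F g.head z := by
  obtain ⟨y, ⟨hyS, hyz⟩, hmin⟩ :=
    hF.wellFounded.has_min {y | y ∈ S ∧ Descend F y z} ⟨z, hz, .refl⟩
  obtain ⟨g, hg, rfl⟩ := hF.exists_parent fun h => h0 (h ▸ hyS)
  refine ⟨g, ⟨hg, hyS, fun y' hy' hy'S => ?_⟩, hyz⟩
  exact hmin y' ⟨hy'S, (hy'.tail (IsParent.of_mem hg)).trans hyz⟩ (.tail' hy' (IsParent.of_mem hg))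

theorem descend_zero_s5 (hF : NonShortenable F) (w : Fin n) : Descend F 0 w := by
  by_contra hw
  obtain ⟨g, ⟨hg, hgS, htS⟩, -⟩ :=
    hF.exists_isEntry (S := {y | ¬ Descend F 0 y}) (fun h => h .refl) hw
  exact hgS ((not_not.1 (htS _ .refl)).tail (IsParent.of_mem hg))

theorem descend_of_mem_uIcc (hF : NonShortenable F) {e : DLink n} (he : e ∈ F) {z : Fin n}
    (hz : z ∈ Set.uIcc e.tail e.head) (hzt : z ≠ e.tail) : Descend F e.head z := by
  obtain ⟨W, ⟨hW, -, honly⟩, hzW⟩ := hF.exists_onlyCovers_mem he hz hzt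
  by_contra hnz
  obtain ⟨g, ⟨hg, ⟨hgW, hgd⟩, htS⟩, -⟩ :=
    hF.exists_isEntry (S := {y | y ∈ W ∧ ¬ Descend F e.head y})
      (fun h => hW.ne_zero_of_mem h.1 rfl) ⟨hzW, hnz⟩
  have hgt : g.tail ∉ W := fun htW =>
    htS g.tail .refl ⟨htW, fun h => hgd (h.tail (IsParent.of_mem hg))⟩
  obtain rfl := honly g hg ⟨hgt, hgW⟩
  exact hgd .refl

theorem descend_tail_of_descend_head (hF : NonShortenable F) {g : DLink n} (hg : g ∈ F)
    {x : Fin n} (h : Descend F x g.head) (hne : x ≠ g.head) : Descend F x g.tail := by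
  rcases h.cases_tail with heq | ⟨c, hxc, f, hf, rfl, hfg⟩
  · exact absurd heq.symm hne
  · rwa [← hF.head_injective hf hg hfg]

theorem descend_tail_of_mem_uIcc (hF : NonShortenable F) {e f : DLink n} (he : e ∈ F)
    (hf : f ∈ F) (h : f.head ∈ Set.uIcc e.tail e.head) (ht : f.head ≠ e.tail)
    (hh : e.head ≠ f.head) : Descend F e.head f.tail :=
  hF.descend_tail_of_descend_head hf (hF.descend_of_mem_uIcc he h ht) hh

theorem head_not_mem_uIcc_of_isEntry (hF : NonShortenable F) {S : Set (Fin n)} {d₁ d₂ : DLink n}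
    (h₁ : IsEntry F S d₁) (h₂ : IsEntry F S d₂) (hne : d₁.head ≠ d₂.head) :
    d₂.head ∉ Set.uIcc d₁.tail d₁.head := fun hmem =>
  h₂.2.2 _ (hF.descend_tail_of_mem_uIcc h₁.1 h₂.1 hmem
    (fun h => h₁.2.2 _ .refl (h ▸ h₂.2.1)) hne) h₁.2.1

/-- On the path from a deepest common ancestor of `u` and `x` to the one on the other side of
`(u, x)`, the link jumping over `(u, x)` leads to a deeper common ancestor. -/
theorem false_of_ancestors_not_mem_Ioo (hF : NonShortenable F) {u x : Fin n} (hux : u < x)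
    (hzone : ∀ z, Descend F z u ∨ Descend F z x → z ≤ u ∨ x ≤ z)
    (hright : ∀ g ∈ F, g.tail ≤ u → x ≤ g.head → Descend F g.head u)
    (hleft : ∀ g ∈ F, g.head ≤ u → x ≤ g.tail → Descend F g.head x) : False := by
  obtain ⟨w, ⟨hwu, hwx⟩, hmax⟩ := hF.wellFounded_flip.has_min
    {w | Descend F w u ∧ Descend F w x} ⟨0, hF.descend_zero_s5 u, hF.descend_zero_s5 x⟩
  rcases hzone w (.inl hwu) with hw | hw
  · obtain ⟨_, _, hwt, ⟨g, hg, rfl, rfl⟩, hhx, ht, hh⟩ :=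
      hwx.exists_exit (p := (· ≤ u)) hw hux.not_ge
    have hgx : x ≤ g.head := (hzone _ (.inr hhx)).resolve_left hh
    exact hmax g.head ⟨hright g hg ht hgx, hhx⟩ (.tail' hwt (IsParent.of_mem hg))
  · obtain ⟨_, _, hwt, ⟨g, hg, rfl, rfl⟩, hhu, ht, hh⟩ :=
      hwu.exists_exit (p := (x ≤ ·)) hw hux.not_ge
    have hgu : g.head ≤ u := (hzone _ (.inl hhu)).resolve_right hh
    exact hmax g.head ⟨hhu, hleft g hg hgu ht⟩ (.tail' hwt (IsParent.of_mem hg))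

theorem false_of_isEntry_of_head_lt (hF : NonShortenable F) {C : Finset (Fin n)} (hC : IsCut C)
    {d₁ d₂ : DLink n} (h₁ : IsEntry F C d₁) (h₂ : IsEntry F C d₂) (hlt : d₁.head < d₂.head) :
    False := by
  obtain ⟨a, b, -, -, rfl⟩ := hC
  have hv₁ : a ≤ d₁.head ∧ d₁.head ≤ b := Finset.mem_Icc.1 h₁.2.1
  have hv₂ : a ≤ d₂.head ∧ d₂.head ≤ b := Finset.mem_Icc.1 h₂.2.1
  have hanc {e z} (he : IsEntry F (Finset.Icc a b : Set (Fin n)) e)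
      (hz : Descend F z d₁.tail ∨ Descend F z d₂.tail) : ¬ Descend F e.head z := fun hez =>
    hz.elim (fun h => h₁.2.2 _ (hez.trans h) he.2.1) (fun h => h₂.2.2 _ (hez.trans h) he.2.1)
  have hu : d₁.tail < a := by
    by_contra! hau
    have hbu : b < d₁.tail := by
      by_contra! hub
      exact h₁.2.2 _ .refl (Finset.mem_Icc.2 ⟨hau, hub⟩)
    exact hF.head_not_mem_uIcc_of_isEntry h₁ h₂ hlt.ne
      (Set.mem_uIcc.2 (.inr ⟨hlt.le, hv₂.2.trans hbu.le⟩))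
  have hx : b < d₂.tail := by
    by_contra! hxb
    have hxa : d₂.tail < a := by
      by_contra! hax
      exact h₂.2.2 _ .refl (Finset.mem_Icc.2 ⟨hax, hxb⟩)
    exact hF.head_not_mem_uIcc_of_isEntry h₂ h₁ hlt.ne'
      (Set.mem_uIcc.2 (.inl ⟨hxa.le.trans hv₁.1, hlt.le⟩))
  refine hF.false_of_ancestors_not_mem_Ioo (u := d₁.tail) (x := d₂.tail)
    (hu.trans_le (hv₁.1.trans (hv₁.2.trans hx.le))) (fun z hz => ?_) (fun g hg ht hh => ?_)
    (fun g hg hh ht => ?_)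
  · by_contra! hzux
    rcases lt_or_ge z a with hza | haz
    · exact hanc h₁ hz (hF.descend_of_mem_uIcc h₁.1
        (Set.mem_uIcc.2 (.inl ⟨hzux.1.le, hza.le.trans hv₁.1⟩)) hzux.1.ne')
    rcases le_or_gt z b with hzb | hbz
    · have hzC : z ∈ Finset.Icc a b := Finset.mem_Icc.2 ⟨haz, hzb⟩
      exact hz.elim (h₁.2.2 z · hzC) (h₂.2.2 z · hzC)
    · exact hanc h₂ hz (hF.descend_of_mem_uIcc h₂.1
        (Set.mem_uIcc.2 (.inr ⟨hv₂.2.trans hbz.le, hzux.2.le⟩)) hzux.2.ne)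
  · exact hF.descend_tail_of_mem_uIcc hg h₁.1
      (Set.mem_uIcc.2 (.inl ⟨ht.trans (hu.le.trans hv₁.1), hv₁.2.trans (hx.le.trans hh)⟩))
      (ht.trans_lt (hu.trans_le hv₁.1)).ne' (hv₁.2.trans_lt (hx.trans_le hh)).ne'
  · exact hF.descend_tail_of_mem_uIcc hg h₂.1
      (Set.mem_uIcc.2 (.inr ⟨hh.trans (hu.le.trans hv₂.1), hv₂.2.trans (hx.le.trans ht)⟩))
      (hv₂.2.trans_lt (hx.trans_le ht)).ne (hh.trans_lt (hu.trans_le hv₂.1)).ne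

theorem head_eq_of_isEntry (hF : NonShortenable F) {C : Finset (Fin n)} (hC : IsCut C)
    {d₁ d₂ : DLink n} (h₁ : IsEntry F C d₁) (h₂ : IsEntry F C d₂) : d₁.head = d₂.head := by
  rcases lt_trichotomy d₁.head d₂.head with hlt | heq | hgt
  · exact (hF.false_of_isEntry_of_head_lt hC h₁ h₂ hlt).elim
  · exact heq
  · exact (hF.false_of_isEntry_of_head_lt hC h₂ h₁ hgt).elim

end NonShortenable

end Arborescence

theorem responsible_iff_all_bad_general {n : ℕ}
    (F : Finset (DLink (n + 3))) (hF : NonShortenable F)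
    (d : DLink (n + 3)) (hd : d ∈ F)
    (C : Finset (Fin (n + 3))) (hC : IsCut C) :
    Responsible F d C ↔ (d.head ∈ C ∧ ∀ u ∈ C, Descend F d.head u) := by
  have h0 : (0 : Fin (n + 3)) ∉ (C : Set (Fin (n + 3))) := fun h => hC.ne_zero_of_mem h rfl
  constructor
  · rintro ⟨-, ⟨-, hv⟩, hresp⟩
    have hentry : IsEntry F C d := ⟨hd, hv, fun y hy hyC => by
      obtain ⟨e, he, hey⟩ := hF.exists_isEntry h0 hyC
      exact hresp e he.1 (hey.trans hy) ⟨he.2.2 _ .refl, he.2.1⟩⟩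
    refine ⟨hv, fun w hw => ?_⟩
    obtain ⟨e, he, hew⟩ := hF.exists_isEntry h0 hw
    rwa [hF.head_eq_of_isEntry hC hentry he]
  · rintro ⟨hv, hall⟩
    have hcycle {w} (hw : Descend F w d.tail) (hwC : w ∈ C) : False :=
      hF.transGen_irrefl _ (.head' (IsParent.of_mem hd) ((hall w hwC).trans hw))
    exact ⟨hC, ⟨fun ht => hcycle .refl ht, hv⟩, fun e _ hed heC => hcycle hed heC.2⟩

/-- for a non-shortenable directed WRAP solution `F`, a
directed link `(u, v) ∈ F` is responsible for a 2-cut `C ∈ C_G` iff `v ∈ C`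
and every vertex of `C` is `v`-bad (i.e. a descendant of `v`). -/
theorem responsible_iff_all_bad {n : ℕ}
    (L : Finset (Link (n + 3))) (c : Link (n + 3) → ℝ)
    (F : Finset (DLink (n + 3))) (hF : NonShortenable F)
    (d : DLink (n + 3)) (hd : d ∈ F)
    (C : Finset (Fin (n + 3))) (hC : IsCut C) :
    Responsible F d C ↔ (d.head ∈ C ∧ ∀ u ∈ C, Descend F d.head u) :=
  responsible_iff_all_bad_general F hF d hd C hC
end
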